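/- Let h ∈ ℝ^N have all entries nonnegative and ‖h‖₂ = 1, and define P f = f − ⟨f, h⟩ h for f ∈ ℝ^N, applied columnwise to matrices. Then for every G ∈ ℝ^{N×m} and every W ∈ ℝ^{m×m'} with ‖W‖_F ≤ 1, ‖P(σ(G W))‖_F ≤ ‖P G‖_F. -/
import Mathlib


open Matrix

noncomputable section

/-- Euclidean (2-)norm on `ℝ^N`. -/
def rnorm2 {N : ℕ} (f : Fin N → ℝ) : ℝ := Real.sqrt (∑ i, f i ^ 2)

/-- Frobenius norm of a real matrix. -/
def frob {N m : ℕ} (M : Matrix (Fin N) (Fin m) ℝ) : ℝ := Real.sqrt (∑ i, ∑ j, M i j ^ 2)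

/-- Entrywise ReLU of a vector. -/
def reluV {N : ℕ} (f : Fin N → ℝ) : Fin N → ℝ := fun i => max (f i) 0

/-- Entrywise ReLU of a matrix. -/
def reluM {N m : ℕ} (M : Matrix (Fin N) (Fin m) ℝ) : Matrix (Fin N) (Fin m) ℝ :=
  Matrix.of fun i j => max (M i j) 0

/-- `P f = f - ⟨f, h⟩ h`. -/
def Pv {N : ℕ} (h : Fin N → ℝ) (f : Fin N → ℝ) : Fin N → ℝ := f - (f ⬝ᵥ h) • h

/-- `P` applied columnwise to a matrix. -/
def Pcol {N m : ℕ} (h : Fin N → ℝ) (M : Matrix (Fin N) (Fin m) ℝ) :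
    Matrix (Fin N) (Fin m) ℝ :=
  Matrix.of fun i j => M i j - ((fun x => M x j) ⬝ᵥ h) * h i

/-- Pythagoras: squared norm of the projection. -/
lemma proj_sq {N : ℕ} (h : Fin N → ℝ) (hh : ∑ i, h i ^ 2 = 1) (f : Fin N → ℝ) :
    ∑ i, (f i - (∑ x, f x * h x) * h i) ^ 2
      = ∑ i, f i ^ 2 - (∑ x, f x * h x) ^ 2 := by
  set c : ℝ := ∑ x, f x * h x with hc
  have e : ∀ i, (f i - c * h i) ^ 2 = f i ^ 2 - 2 * c * (f i * h i) + c ^ 2 * h i ^ 2 :=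
    fun i => by ring
  simp only [e]
  rw [Finset.sum_add_distrib, Finset.sum_sub_distrib, ← Finset.mul_sum, ← Finset.mul_sum, hh]
  ring

/-- Per-vector key inequality. -/
lemma vec_key {N : ℕ} (h : Fin N → ℝ) (hpos : ∀ i, 0 ≤ h i) (hh : ∑ i, h i ^ 2 = 1)
    (f : Fin N → ℝ) :
    ∑ i, (max (f i) 0 - (∑ x, max (f x) 0 * h x) * h i) ^ 2
      ≤ ∑ i, (f i - (∑ x, f x * h x) * h i) ^ 2 := by
  rw [proj_sq h hh, proj_sq h hh]
  set fp : Fin N → ℝ := fun i => max (f i) 0 with hfp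
  set fm : Fin N → ℝ := fun i => max (-f i) 0 with hfm
  have hsplit : ∀ i, f i = fp i - fm i := by
    intro i; simp [hfp, hfm, max_def]; split_ifs with h1 h2 <;> linarith
  have hsq : ∀ i, f i ^ 2 = fp i ^ 2 + fm i ^ 2 := by
    intro i; simp only [hfp, hfm, max_def]
    split_ifs with h1 h2 h2 <;> [skip; skip; skip; skip] <;> nlinarith
  have hsum2 : ∑ i, f i ^ 2 = ∑ i, fp i ^ 2 + ∑ i, fm i ^ 2 := by
    rw [← Finset.sum_add_distrib]; exact Finset.sum_congr rfl fun i _ => hsq i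
  set a : ℝ := ∑ x, fp x * h x with ha
  set b : ℝ := ∑ x, fm x * h x with hb
  have hab : ∑ x, f x * h x = a - b := by
    rw [ha, hb, ← Finset.sum_sub_distrib]
    exact Finset.sum_congr rfl fun i _ => by rw [hsplit i]; ring
  have ha0 : 0 ≤ a := Finset.sum_nonneg fun i _ =>
    mul_nonneg (le_max_right _ _) (hpos i)
  have hb0 : 0 ≤ b := Finset.sum_nonneg fun i _ =>
    mul_nonneg (le_max_right _ _) (hpos i)
  have hcs : b ^ 2 ≤ (∑ x, fm x ^ 2) * ∑ x, h x ^ 2 :=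
    Finset.sum_mul_sq_le_sq_mul_sq _ _ _
  rw [hh, mul_one] at hcs
  rw [hsum2, hab]
  nlinarith

/-- Pcol commutes with right multiplication. -/
lemma pcol_mul {N m m' : ℕ} (h : Fin N → ℝ) (G : Matrix (Fin N) (Fin m) ℝ)
    (W : Matrix (Fin m) (Fin m') ℝ) :
    Pcol h (G * W) = (Pcol h G) * W := by
  ext i j
  simp only [Pcol, Matrix.mul_apply, Matrix.of_apply, dotProduct, sub_mul,
    Finset.sum_sub_distrib, Finset.sum_mul]
  congr 1
  rw [Finset.sum_comm]
  refine Finset.sum_congr rfl fun k _ => ?_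
  refine Finset.sum_congr rfl fun x _ => by ring

lemma sq_sum_nonneg {N m : ℕ} (M : Matrix (Fin N) (Fin m) ℝ) :
    0 ≤ ∑ i, ∑ j, M i j ^ 2 :=
  Finset.sum_nonneg fun _ _ => Finset.sum_nonneg fun _ _ => sq_nonneg _

/-- Frobenius submultiplicativity. -/
lemma frob_mul_le {N m m' : ℕ} (A : Matrix (Fin N) (Fin m) ℝ)
    (B : Matrix (Fin m) (Fin m') ℝ) : frob (A * B) ≤ frob A * frob B := by
  have key : ∑ i, ∑ j, (A * B) i j ^ 2
      ≤ (∑ i, ∑ k, A i k ^ 2) * (∑ k, ∑ j, B k j ^ 2) := by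
    calc ∑ i, ∑ j, (A * B) i j ^ 2
        ≤ ∑ i, ∑ j, (∑ k, A i k ^ 2) * (∑ k, B k j ^ 2) := by
          refine Finset.sum_le_sum fun i _ => Finset.sum_le_sum fun j _ => ?_
          simpa [Matrix.mul_apply] using Finset.sum_mul_sq_le_sq_mul_sq Finset.univ
            (fun k => A i k) (fun k => B k j)
      _ = (∑ i, ∑ k, A i k ^ 2) * (∑ j, ∑ k, B k j ^ 2) := by
          rw [Finset.sum_mul]
          exact Finset.sum_congr rfl fun i _ => by rw [← Finset.mul_sum]
      _ = (∑ i, ∑ k, A i k ^ 2) * (∑ k, ∑ j, B k j ^ 2) := by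
          congr 1; exact Finset.sum_comm
  have h1 : frob (A * B) ≤ Real.sqrt ((∑ i, ∑ k, A i k ^ 2) * (∑ k, ∑ j, B k j ^ 2)) :=
    Real.sqrt_le_sqrt key
  rw [Real.sqrt_mul (sq_sum_nonneg A)] at h1
  exact h1

/-- if `h ∈ ℝ^N` has nonnegative entries and `‖h‖₂ = 1`, with
`P f = f - ⟨f, h⟩ h` applied columnwise, then for every `G ∈ ℝ^{N×m}` and every
`W ∈ ℝ^{m×m'}` with `‖W‖_F ≤ 1`, `‖P(σ(G W))‖_F ≤ ‖P G‖_F`. -/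
theorem stmt11 (N m m' : ℕ) (hN : 1 ≤ N) (hm : 1 ≤ m) (hm' : 1 ≤ m')
    (h : Fin N → ℝ) (hpos : ∀ i, 0 ≤ h i) (hnorm : rnorm2 h = 1)
    (G : Matrix (Fin N) (Fin m) ℝ) (W : Matrix (Fin m) (Fin m') ℝ) (hW : frob W ≤ 1) :
    frob (Pcol h (reluM (G * W))) ≤ frob (Pcol h G) := by
  have hh : ∑ i, h i ^ 2 = 1 := Real.sqrt_eq_one.mp hnorm
  set M := G * W with hM
  -- step 1: frob (Pcol h (reluM M)) ≤ frob (Pcol h M)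
  have step1 : frob (Pcol h (reluM M)) ≤ frob (Pcol h M) := by
    apply Real.sqrt_le_sqrt
    have swap : ∀ (A : Matrix (Fin N) (Fin m') ℝ),
        ∑ i, ∑ j, A i j ^ 2 = ∑ j, ∑ i, A i j ^ 2 := fun A => Finset.sum_comm
    rw [swap, swap]
    refine Finset.sum_le_sum fun j _ => ?_
    simpa [Pcol, reluM, dotProduct] using
      vec_key h hpos hh (fun x => M x j)
  have step2 : frob (Pcol h M) ≤ frob (Pcol h G) * frob W := by
    rw [hM, pcol_mul]; exact frob_mul_le _ _
  have hf0 : 0 ≤ frob (Pcol h G) := Real.sqrt_nonneg _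
  calc frob (Pcol h (reluM M)) ≤ frob (Pcol h G) * frob W := le_trans step1 step2
    _ ≤ frob (Pcol h G) * 1 := by nlinarith
    _ = frob (Pcol h G) := mul_one _
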